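/- arXiv:2206.12758 — 9 statements merged into one kernel-verified Lean document; each statement's English description precedes it below -/
import Mathlib

section
/- Let G be a finite group and H, K subgroups of G. Then m_G(H)·m_G(K) ≤ m_G(⟨H,K⟩)·m_G(H ∩ K), where m_G(X) = |X|·|C_G(X)| is the Chermak–Delgado measure. -/
open scoped Pointwise

/-- Chermak–Delgado measure `m_G(K) = |K| * |C_G(K)|`. -/
noncomputable def mG {G : Type*} [Group G] (K : Subgroup G) : ℕ :=
  Nat.card K * Nat.card (Subgroup.centralizer (K : Set G))

/-- The product formula inequality: `|H| * |K| ≤ |H ⊔ K| * |H ⊓ K|`. -/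
lemma card_mul_card_le_sup_inf {G : Type*} [Group G] [Finite G] (H K : Subgroup G) :
    Nat.card H * Nat.card K ≤
      Nat.card (H ⊔ K : Subgroup G) * Nat.card (H ⊓ K : Subgroup G) := by
  obtain ⟨S, hS, -⟩ := ((H ⊓ K).subgroupOf H).exists_isComplement_left 1
  have hcompl : Subgroup.IsComplement S (((H ⊓ K).subgroupOf H : Subgroup H) : Set H) := hS
  have hcard : Nat.card S * Nat.card ((H ⊓ K).subgroupOf H) = Nat.card H :=
    hcompl.card_mul_card
  have hsub : Nat.card ((H ⊓ K).subgroupOf H) = Nat.card (H ⊓ K : Subgroup G) :=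
    Nat.card_congr (Subgroup.subgroupOfEquivOfLe inf_le_left).toEquiv
  -- the map (s, k) ↦ s * k from S × K into H ⊔ K is injective
  have key : Nat.card S * Nat.card K ≤ Nat.card (H ⊔ K : Subgroup G) := by
    have hinj : Function.Injective
        (fun p : S × K => ((⟨(p.1 : H) * (p.2 : G), by
          exact mul_mem (Subgroup.mem_sup_left (p.1 : H).2)
            (Subgroup.mem_sup_right p.2.2)⟩ : (H ⊔ K : Subgroup G)))) := by
      rintro ⟨s₁, k₁⟩ ⟨s₂, k₂⟩ h
      have h' : ((s₁ : H) : G) * (k₁ : G) = ((s₂ : H) : G) * (k₂ : G) :=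
        congrArg Subtype.val h
      have hmemK : ((s₂ : H) : G)⁻¹ * ((s₁ : H) : G) ∈ K := by
        have : ((s₂ : H) : G)⁻¹ * ((s₁ : H) : G) = (k₂ : G) * (k₁ : G)⁻¹ := by
          rw [inv_mul_eq_iff_eq_mul, ← mul_assoc, ← h', mul_assoc, mul_inv_cancel, mul_one]
        rw [this]
        exact mul_mem k₂.2 (inv_mem k₁.2)
      have hmemH : ((s₂ : H) : G)⁻¹ * ((s₁ : H) : G) ∈ H :=
        mul_mem (inv_mem (s₂ : H).2) (s₁ : H).2
      set d : H := (s₂ : H)⁻¹ * (s₁ : H) with hd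
      have hmem : d ∈ (H ⊓ K).subgroupOf H := by
        simp only [Subgroup.mem_subgroupOf, Subgroup.mem_inf]
        exact ⟨hmemH, hmemK⟩
      have hdec : (fun x : S × ((H ⊓ K).subgroupOf H : Subgroup H) => (x.1 : H) * (x.2 : H))
          (s₂, ⟨d, hmem⟩) =
          (fun x : S × ((H ⊓ K).subgroupOf H : Subgroup H) => (x.1 : H) * (x.2 : H))
          (s₁, 1) := by
        simp [hd, mul_assoc]
      have := hcompl.1 hdec
      have hs : s₂ = s₁ := (Prod.ext_iff.mp this).1
      have hk : (k₁ : G) = (k₂ : G) := by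
        have hs' : ((s₁ : H) : G) = ((s₂ : H) : G) := by rw [hs]
        exact mul_left_cancel (a := ((s₁ : H) : G)) (by rw [h']; rw [hs'])
      exact Prod.ext hs.symm (Subtype.ext hk)
    calc Nat.card S * Nat.card K = Nat.card (S × K) := (Nat.card_prod _ _).symm
      _ ≤ Nat.card (H ⊔ K : Subgroup G) := Nat.card_le_card_of_injective _ hinj
  calc Nat.card H * Nat.card K
      = (Nat.card S * Nat.card K) * Nat.card (H ⊓ K : Subgroup G) := by
        rw [← hcard, hsub]; ring
    _ ≤ Nat.card (H ⊔ K : Subgroup G) * Nat.card (H ⊓ K : Subgroup G) :=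
        Nat.mul_le_mul_right _ key

theorem stmt0 {G : Type*} [Group G] [Finite G] (H K : Subgroup G) :
    mG H * mG K ≤ mG (H ⊔ K) * mG (H ⊓ K) := by
  have h1 : Nat.card H * Nat.card K ≤
      Nat.card (H ⊔ K : Subgroup G) * Nat.card (H ⊓ K : Subgroup G) :=
    card_mul_card_le_sup_inf H K
  set CH := Subgroup.centralizer (H : Set G)
  set CK := Subgroup.centralizer (K : Set G)
  have h2 : Nat.card CH * Nat.card CK ≤
      Nat.card (CH ⊔ CK : Subgroup G) * Nat.card (CH ⊓ CK : Subgroup G) :=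
    card_mul_card_le_sup_inf CH CK
  -- CH ⊔ CK ≤ centralizer (H ⊓ K)
  have hsup : (CH ⊔ CK : Subgroup G) ≤ Subgroup.centralizer ((H ⊓ K : Subgroup G) : Set G) :=
    sup_le (Subgroup.centralizer_le (by exact_mod_cast inf_le_left))
      (Subgroup.centralizer_le (by exact_mod_cast inf_le_right))
  -- CH ⊓ CK ≤ centralizer (H ⊔ K)
  have hinf : (CH ⊓ CK : Subgroup G) ≤ Subgroup.centralizer ((H ⊔ K : Subgroup G) : Set G) := by
    rw [← Subgroup.le_centralizer_iff]
    refine sup_le ?_ ?_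
    · exact le_trans (Subgroup.le_centralizer_iff.mpr le_rfl)
        (Subgroup.centralizer_le (by exact_mod_cast inf_le_left))
    · exact le_trans (Subgroup.le_centralizer_iff.mpr le_rfl)
        (Subgroup.centralizer_le (by exact_mod_cast inf_le_right))
  have h3 : Nat.card CH * Nat.card CK ≤
      Nat.card (Subgroup.centralizer ((H ⊓ K : Subgroup G) : Set G)) *
        Nat.card (Subgroup.centralizer ((H ⊔ K : Subgroup G) : Set G)) :=
    h2.trans (Nat.mul_le_mul (Subgroup.card_le_of_le hsup) (Subgroup.card_le_of_le hinf))
  unfold mG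
  calc Nat.card H * Nat.card CH * (Nat.card K * Nat.card CK)
      = (Nat.card H * Nat.card K) * (Nat.card CH * Nat.card CK) := by ring
    _ ≤ (Nat.card (H ⊔ K : Subgroup G) * Nat.card (H ⊓ K : Subgroup G)) *
        (Nat.card (Subgroup.centralizer ((H ⊓ K : Subgroup G) : Set G)) *
          Nat.card (Subgroup.centralizer ((H ⊔ K : Subgroup G) : Set G))) :=
        Nat.mul_le_mul h1 h3
    _ = _ := by ring
end

section
/- Let G be a finite group and H, K subgroups of G. If m_G(H)·m_G(K) = m_G(⟨H,K⟩)·m_G(H ∩ K), then ⟨H,K⟩ = HK (the set product is a subgroup) and C_G(H ∩ K) = C_G(H)·C_G(K). -/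
open scoped Pointwise

lemma card_mul_mul_card_inf {G : Type*} [Group G] [Finite G] (A B : Subgroup G) :
    Nat.card ((A : Set G) * (B : Set G) : Set G) * Nat.card (A ⊓ B : Subgroup G) =
      Nat.card A * Nat.card B := by
  classical
  set S : Set G := (A : Set G) * (B : Set G) with hS
  have hr : ∀ y : S, ∃ p : A × B, (p.1 : G) * p.2 = y := by
    rintro ⟨y, a, ha, b, hb, rfl⟩
    exact ⟨(⟨a, ha⟩, ⟨b, hb⟩), rfl⟩
  choose r hrr using hr
  have hbij : Function.Bijective
      (fun q : S × (A ⊓ B : Subgroup G) =>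
        ((⟨((r q.1).1 : G) * q.2, A.mul_mem (r q.1).1.2 q.2.2.1⟩,
          ⟨(q.2 : G)⁻¹ * (r q.1).2, B.mul_mem (B.inv_mem q.2.2.2) (r q.1).2.2⟩) : A × B)) := by
    constructor
    · rintro ⟨y₁, d₁⟩ ⟨y₂, d₂⟩ h
      simp only [Prod.mk.injEq, Subtype.mk.injEq] at h
      obtain ⟨h1, h2⟩ := h
      have hy : (y₁ : G) = y₂ := by
        rw [← hrr y₁, ← hrr y₂]
        calc ((r y₁).1 : G) * (r y₁).2
            = (((r y₁).1 : G) * d₁) * ((d₁ : G)⁻¹ * (r y₁).2) := by group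
          _ = (((r y₂).1 : G) * d₂) * ((d₂ : G)⁻¹ * (r y₂).2) := by rw [h1, h2]
          _ = ((r y₂).1 : G) * (r y₂).2 := by group
      have hy' : y₁ = y₂ := Subtype.ext hy
      subst hy'
      have : (d₁ : G) = d₂ := by
        have := mul_left_cancel (a := ((r y₁).1 : G)) h1
        exact this
      exact Prod.ext rfl (Subtype.ext this)
    · rintro ⟨h, k⟩
      have hy : ((h : G) * k) ∈ S := Set.mul_mem_mul h.2 k.2
      set y : S := ⟨(h : G) * k, hy⟩ with hy'
      have hab : ((r y).1 : G) * (r y).2 = (h : G) * k := hrr y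
      have hdA : ((r y).1 : G)⁻¹ * h ∈ A := A.mul_mem (A.inv_mem (r y).1.2) h.2
      have hdB : ((r y).1 : G)⁻¹ * h ∈ B := by
        have h2 : ((r y).2 : G) = ((r y).1 : G)⁻¹ * ((h : G) * k) := by
          rw [← hab]; group
        have : ((r y).1 : G)⁻¹ * h = ((r y).2 : G) * (k : G)⁻¹ := by
          rw [h2]; group
        rw [this]
        exact B.mul_mem (r y).2.2 (B.inv_mem k.2)
      refine ⟨⟨y, ⟨((r y).1 : G)⁻¹ * h, hdA, hdB⟩⟩, ?_⟩
      ext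
      · simp
      · show (((r y).1 : G)⁻¹ * h)⁻¹ * (r y).2 = (k : G)
        have : ((r y).2 : G) = ((r y).1 : G)⁻¹ * (h * k) := by
          rw [← hab]; group
        rw [this]; group
  have := Nat.card_eq_of_bijective _ hbij
  rw [Nat.card_prod, Nat.card_prod] at this
  rw [mul_comm] at this ⊢
  exact this

lemma centralizer_sup' {G : Type*} [Group G] (H K : Subgroup G) :
    Subgroup.centralizer ((H ⊔ K : Subgroup G) : Set G) =
      Subgroup.centralizer (H : Set G) ⊓ Subgroup.centralizer (K : Set G) := by
  apply le_antisymm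
  · exact le_inf (Subgroup.centralizer_le (SetLike.coe_subset_coe.2 le_sup_left))
      (Subgroup.centralizer_le (SetLike.coe_subset_coe.2 le_sup_right))
  · rw [Subgroup.le_centralizer_iff]
    refine sup_le ?_ ?_
    · exact (Subgroup.le_centralizer_iff.1 le_rfl).trans
        (Subgroup.centralizer_le (SetLike.coe_subset_coe.2 inf_le_left))
    · exact (Subgroup.le_centralizer_iff.1 le_rfl).trans
        (Subgroup.centralizer_le (SetLike.coe_subset_coe.2 inf_le_right))

theorem stmt1 {G : Type*} [Group G] [Finite G] (H K : Subgroup G)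
    (heq : mG H * mG K = mG (H ⊔ K) * mG (H ⊓ K)) :
    ((H ⊔ K : Subgroup G) : Set G) = (H : Set G) * (K : Set G) ∧
      ((Subgroup.centralizer ((H ⊓ K : Subgroup G) : Set G) : Subgroup G) : Set G) =
        (Subgroup.centralizer (H : Set G) : Set G) *
          (Subgroup.centralizer (K : Set G) : Set G) := by
  classical
  set CH := Subgroup.centralizer (H : Set G)
  set CK := Subgroup.centralizer (K : Set G)
  have key1 := card_mul_mul_card_inf H K
  have key2 := card_mul_mul_card_inf CH CK
  have hC : Subgroup.centralizer ((H ⊔ K : Subgroup G) : Set G) = CH ⊓ CK :=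
    centralizer_sup' H K
  -- subsets
  have hsub1 : (H : Set G) * (K : Set G) ⊆ ((H ⊔ K : Subgroup G) : Set G) := by
    rw [Subgroup.sup_eq_closure_mul]
    exact Subgroup.subset_closure
  have hCHle : CH ≤ Subgroup.centralizer ((H ⊓ K : Subgroup G) : Set G) :=
    Subgroup.centralizer_le (SetLike.coe_subset_coe.2 inf_le_left)
  have hCKle : CK ≤ Subgroup.centralizer ((H ⊓ K : Subgroup G) : Set G) :=
    Subgroup.centralizer_le (SetLike.coe_subset_coe.2 inf_le_right)
  have hsub2 : (CH : Set G) * (CK : Set G) ⊆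
      ((Subgroup.centralizer ((H ⊓ K : Subgroup G) : Set G) : Subgroup G) : Set G) := by
    rintro x ⟨c, hc, d, hd, rfl⟩
    exact mul_mem (hCHle hc) (hCKle hd)
  -- notation for cards
  set x1 := Nat.card ((H : Set G) * (K : Set G) : Set G)
  set y1 := Nat.card ((CH : Set G) * (CK : Set G) : Set G)
  set X1 := Nat.card (H ⊔ K : Subgroup G)
  set Y1 := Nat.card (Subgroup.centralizer ((H ⊓ K : Subgroup G) : Set G))
  have hle1 : x1 ≤ X1 := by
    have := Set.ncard_le_ncard hsub1 (Set.toFinite _)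
    rw [← Nat.card_coe_set_eq, ← Nat.card_coe_set_eq] at this; exact this
  have hle2 : y1 ≤ Y1 := by
    have := Set.ncard_le_ncard hsub2 (Set.toFinite _)
    rw [← Nat.card_coe_set_eq, ← Nat.card_coe_set_eq] at this; exact this
  have hi : 0 < Nat.card (H ⊓ K : Subgroup G) := Nat.card_pos
  have hj : 0 < Nat.card (CH ⊓ CK : Subgroup G) := Nat.card_pos
  have hX1 : 0 < X1 := Nat.card_pos
  have hY1 : 0 < Y1 := Nat.card_pos
  -- main card equation
  have hmain : x1 * y1 = X1 * Y1 := by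
    have hexp : (Nat.card H * Nat.card K) * (Nat.card CH * Nat.card CK) =
        (X1 * Y1) * (Nat.card (H ⊓ K : Subgroup G) * Nat.card (CH ⊓ CK : Subgroup G)) := by
      have h2 : Nat.card (Subgroup.centralizer ((H ⊔ K : Subgroup G) : Set G)) =
          Nat.card (CH ⊓ CK : Subgroup G) := by rw [hC]
      simp only [mG] at heq
      calc (Nat.card H * Nat.card K) * (Nat.card CH * Nat.card CK)
          = (Nat.card H * Nat.card CH) * (Nat.card K * Nat.card CK) := by ring
        _ = (X1 * Nat.card (Subgroup.centralizer ((H ⊔ K : Subgroup G) : Set G))) *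
            (Nat.card (H ⊓ K : Subgroup G) * Y1) := heq
        _ = (X1 * Y1) * (Nat.card (H ⊓ K : Subgroup G) *
              Nat.card (CH ⊓ CK : Subgroup G)) := by rw [h2]; ring
    have : (x1 * y1) * (Nat.card (H ⊓ K : Subgroup G) * Nat.card (CH ⊓ CK : Subgroup G)) =
        (X1 * Y1) * (Nat.card (H ⊓ K : Subgroup G) * Nat.card (CH ⊓ CK : Subgroup G)) := by
      rw [← hexp, ← key1, ← key2]; ring
    exact Nat.eq_of_mul_eq_mul_right (Nat.mul_pos hi hj) this
  have hx : x1 = X1 := by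
    have h1 : X1 * Y1 ≤ x1 * Y1 := by
      calc X1 * Y1 = x1 * y1 := hmain.symm
        _ ≤ x1 * Y1 := Nat.mul_le_mul_left _ hle2
    have := Nat.le_of_mul_le_mul_right h1 hY1
    omega
  have hy : y1 = Y1 := by
    have h1 : X1 * Y1 ≤ X1 * y1 := by
      calc X1 * Y1 = x1 * y1 := hmain.symm
        _ ≤ X1 * y1 := Nat.mul_le_mul_right _ hle1
    have := Nat.le_of_mul_le_mul_left h1 hX1
    omega
  constructor
  · refine (Set.eq_of_subset_of_ncard_le hsub1 ?_ (Set.toFinite _)).symm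
    rw [← Nat.card_coe_set_eq, ← Nat.card_coe_set_eq]
    exact le_of_eq hx.symm
  · refine (Set.eq_of_subset_of_ncard_le hsub2 ?_ (Set.toFinite _)).symm
    rw [← Nat.card_coe_set_eq, ← Nat.card_coe_set_eq]
    exact le_of_eq hy.symm
end

section
/- Let G be a finite group and K ≤ X ≤ H ≤ G subgroups. Then m_H(K)·m_G(X) ≤ m_H(X)·m_G(K), i.e., m_H(K)/m_G(K) ≤ m_H(X)/m_G(X). -/
open scoped Pointwise

lemma card_inf_mul_relindex {G : Type*} [Group G] (H K : Subgroup G) :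
    Nat.card (H ⊓ K : Subgroup G) * H.relIndex K = Nat.card K := by
  rw [← Subgroup.inf_relIndex_right H K]
  rw [show Nat.card (H ⊓ K : Subgroup G) =
      Nat.card ((H ⊓ K).subgroupOf K) from
    Nat.card_congr (Subgroup.subgroupOfEquivOfLe inf_le_right).toEquiv.symm]
  exact Subgroup.card_mul_index _

/-- Relative Chermak–Delgado measure `m_W(K) = |K| * |C_W(K)|`. -/
noncomputable def m {G : Type*} [Group G] (W K : Subgroup G) : ℕ :=
  Nat.card K * Nat.card (W ⊓ Subgroup.centralizer (K : Set G) : Subgroup G)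

theorem stmt2 {G : Type*} [Group G] [Finite G] (K X H : Subgroup G)
    (hKX : K ≤ X) (hXH : X ≤ H) :
    m H K * m (⊤ : Subgroup G) X ≤ m H X * m (⊤ : Subgroup G) K := by
  set A := Subgroup.centralizer (K : Set G)
  set B := Subgroup.centralizer (X : Set G)
  have hBA : B ≤ A := Subgroup.centralizer_le (by exact_mod_cast hKX)
  have key : Nat.card (H ⊓ A : Subgroup G) * Nat.card B ≤
      Nat.card (H ⊓ B : Subgroup G) * Nat.card A := by
    rw [← card_inf_mul_relindex H B, ← card_inf_mul_relindex H A]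
    have hrel : H.relIndex B ≤ H.relIndex A :=
      Subgroup.relIndex_le_of_le_right hBA
        (Subgroup.index_ne_zero_of_finite)
    calc Nat.card (H ⊓ A : Subgroup G) * (Nat.card (H ⊓ B : Subgroup G) * H.relIndex B)
        ≤ Nat.card (H ⊓ A : Subgroup G) * (Nat.card (H ⊓ B : Subgroup G) * H.relIndex A) := by
          exact Nat.mul_le_mul_left _ (Nat.mul_le_mul_left _ hrel)
      _ = Nat.card (H ⊓ B : Subgroup G) * (Nat.card (H ⊓ A : Subgroup G) * H.relIndex A) := by
          ring
  simp only [m, top_inf_eq]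
  calc Nat.card K * Nat.card (H ⊓ A : Subgroup G) * (Nat.card X * Nat.card B)
      = (Nat.card K * Nat.card X) * (Nat.card (H ⊓ A : Subgroup G) * Nat.card B) := by ring
    _ ≤ (Nat.card K * Nat.card X) * (Nat.card (H ⊓ B : Subgroup G) * Nat.card A) :=
        Nat.mul_le_mul_left _ key
    _ = Nat.card X * Nat.card (H ⊓ B : Subgroup G) * (Nat.card K * Nat.card A) := by ring
end

section
/- Let G be a finite group and K ≤ X ≤ H ≤ G subgroups. Then m_H(K)·m_G(X) = m_H(X)·m_G(K) if and only if C_G(K) ⊆ H·C_G(X). -/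
/-!
Write `A = C_G(K)` and `B = C_G(X)`, so `B ≤ A`. After cancelling `|K|·|X|` the identity reads
`|H ∩ A|·|B| = |H ∩ B|·|A|`, which by the product formula `|HA|·|H ∩ A| = |H|·|A|` says
`|HA| = |HB|`. Since `HB ⊆ HA` are finite, this means `HA = HB`, i.e. `A ⊆ HB`.
-/

open scoped Pointwise

namespace Subgroup

variable {G : Type*} [Group G]

theorem card_mul_mul_card_inf (H A : Subgroup G) :
    Nat.card ((H : Set G) * (A : Set G)) * Nat.card (H ⊓ A : Subgroup G) =
      Nat.card H * Nat.card A := by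
  -- Orbit–stabilizer: `HA / A` is the `H`-orbit of the coset `A` in `G ⧸ A`, with stabilizer `H ∩ A`.
  have hsmul (h : H) : h • ((1 : G) : G ⧸ A) = ((h : G) : G ⧸ A) := congrArg _ (mul_one _)
  have horbit : ((↑) '' (H : Set G) : Set (G ⧸ A)) = MulAction.orbit H ((1 : G) : G ⧸ A) := by
    ext x; simp [MulAction.mem_orbit_iff, eq_comm, hsmul]
  have hstab : MulAction.stabilizer H ((1 : G) : G ⧸ A) = A.subgroupOf H := by
    ext h; simp [mem_subgroupOf, hsmul, QuotientGroup.eq]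
  have hinf : Nat.card (A.subgroupOf H) = Nat.card (H ⊓ A : Subgroup G) := by
    rw [← inf_subgroupOf_left]
    exact Nat.card_congr (subgroupOfEquivOfLe inf_le_left).toEquiv
  rw [card_mul_eq_card_subgroup_mul_card_quotient, horbit, Nat.card_coe_set_eq,
    ← MulAction.index_stabilizer, hstab, ← hinf, mul_assoc, (A.subgroupOf H).index_mul_card,
    mul_comm]

theorem card_inf_mul_card_eq_iff_card_mul_eq [Finite G] (H A B : Subgroup G) :
    Nat.card (H ⊓ A : Subgroup G) * Nat.card B = Nat.card (H ⊓ B : Subgroup G) * Nat.card A ↔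
      Nat.card ((H : Set G) * (A : Set G)) = Nat.card ((H : Set G) * (B : Set G)) := by
  have hA := card_mul_mul_card_inf H A
  have hB := card_mul_mul_card_inf H B
  have eA : Nat.card H * (Nat.card (H ⊓ B : Subgroup G) * Nat.card A) =
      Nat.card (H ⊓ A : Subgroup G) * Nat.card (H ⊓ B : Subgroup G) *
        Nat.card ((H : Set G) * (A : Set G)) := by
    rw [mul_left_comm, ← hA]; ring
  have eB : Nat.card H * (Nat.card (H ⊓ A : Subgroup G) * Nat.card B) =
      Nat.card (H ⊓ A : Subgroup G) * Nat.card (H ⊓ B : Subgroup G) *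
        Nat.card ((H : Set G) * (B : Set G)) := by
    rw [mul_left_comm, ← hB]; ring
  have hpos : 0 < Nat.card (H ⊓ A : Subgroup G) * Nat.card (H ⊓ B : Subgroup G) :=
    Nat.mul_pos Nat.card_pos Nat.card_pos
  rw [← Nat.mul_left_cancel_iff (Nat.card_pos : 0 < Nat.card H), eA, eB,
    Nat.mul_left_cancel_iff hpos, eq_comm]

theorem coe_mul_coe_eq_iff_subset {H A B : Subgroup G} (hBA : B ≤ A) :
    (H : Set G) * A = H * B ↔ (A : Set G) ⊆ H * B := by
  refine ⟨fun h => h ▸ Set.subset_mul_right _ H.one_mem, fun h => ?_⟩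
  refine (Set.mul_subset_mul_left h).trans ?_ |>.antisymm (Set.mul_subset_mul_left hBA)
  rw [← mul_assoc, coe_mul_coe]

theorem card_mul_eq_card_mul_iff_subset [Finite G] {H A B : Subgroup G} (hBA : B ≤ A) :
    Nat.card ((H : Set G) * (A : Set G)) = Nat.card ((H : Set G) * (B : Set G)) ↔
      (A : Set G) ⊆ H * B := by
  rw [← coe_mul_coe_eq_iff_subset hBA]
  refine ⟨fun h => ?_, fun h => h ▸ rfl⟩
  refine (Set.eq_of_subset_of_ncard_le (Set.mul_subset_mul_left hBA) ?_).symm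
  rw [← Nat.card_coe_set_eq, ← Nat.card_coe_set_eq, h]

end Subgroup

theorem stmt3_general {G : Type*} [Group G] [Finite G] (K X H : Subgroup G)
    (hKX : K ≤ X) :
    m H K * m (⊤ : Subgroup G) X = m H X * m (⊤ : Subgroup G) K ↔
      (Subgroup.centralizer (K : Set G) : Set G) ⊆
        (H : Set G) * (Subgroup.centralizer (X : Set G) : Set G) := by
  set A := Subgroup.centralizer (K : Set G)
  set B := Subgroup.centralizer (X : Set G)
  have hK : m H K * m ⊤ X =
      (Nat.card K * Nat.card X) * (Nat.card (H ⊓ A : Subgroup G) * Nat.card B) := by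
    simp only [m, top_inf_eq]; ring
  have hX : m H X * m ⊤ K =
      (Nat.card K * Nat.card X) * (Nat.card (H ⊓ B : Subgroup G) * Nat.card A) := by
    simp only [m, top_inf_eq]; ring
  rw [hK, hX, Nat.mul_left_cancel_iff (Nat.mul_pos Nat.card_pos Nat.card_pos),
    Subgroup.card_inf_mul_card_eq_iff_card_mul_eq,
    Subgroup.card_mul_eq_card_mul_iff_subset (Subgroup.centralizer_le hKX)]

theorem stmt3 {G : Type*} [Group G] [Finite G] (K X H : Subgroup G)
    (hKX : K ≤ X) (hXH : X ≤ H) :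
    m H K * m (⊤ : Subgroup G) X = m H X * m (⊤ : Subgroup G) K ↔
      (Subgroup.centralizer (K : Set G) : Set G) ⊆
        (H : Set G) * (Subgroup.centralizer (X : Set G) : Set G) :=
  stmt3_general K X H hKX
end

section
/- Suppose a group G = AB with subgroups H₁, H₂ satisfying A ∩ B ≤ H₁ ≤ A, A ∩ B ≤ H₂ ≤ A, and subgroups K₁, K₂ with A ∩ B ≤ K₁ ≤ B, A ∩ B ≤ K₂ ≤ B. If H₁K₁ ⊆ H₂K₂ (as sets), then H₁ ≤ H₂ and K₁ ≤ K₂. -/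
open scoped Pointwise

namespace Subgroup

variable {G : Type*} [Group G] {A B H K : Subgroup G}

theorem mul_inter_left_subset (hHA : H ≤ A) (hKB : K ≤ B) (hAB : A ⊓ B ≤ H) :
    (H : Set G) * K ∩ A ⊆ H := by
  rintro _ ⟨⟨h, hh, k, hk, rfl⟩, hhk⟩
  have hkA : k ∈ A := (A.mul_mem_cancel_left (hHA hh)).mp hhk
  exact H.mul_mem hh (hAB ⟨hkA, hKB hk⟩)

theorem mul_inter_right_subset (hHA : H ≤ A) (hKB : K ≤ B) (hAB : A ⊓ B ≤ K) :
    (H : Set G) * K ∩ B ⊆ K := by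
  rintro _ ⟨⟨h, hh, k, hk, rfl⟩, hhk⟩
  have hhB : h ∈ B := (B.mul_mem_cancel_right (hKB hk)).mp hhk
  exact K.mul_mem (hAB ⟨hHA hh, hhB⟩) hk

end Subgroup

theorem stmt8_general {G : Type*} [Group G] (A B H₁ H₂ K₁ K₂ : Subgroup G)
    (hH₁A : H₁ ≤ A) (hH₂ : A ⊓ B ≤ H₂) (hH₂A : H₂ ≤ A)
    (hK₁B : K₁ ≤ B) (hK₂ : A ⊓ B ≤ K₂) (hK₂B : K₂ ≤ B)
    (hsub : (H₁ : Set G) * (K₁ : Set G) ⊆ (H₂ : Set G) * (K₂ : Set G)) :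
    H₁ ≤ H₂ ∧ K₁ ≤ K₂ := by
  constructor
  · intro h hh
    have hh' : h ∈ (H₂ : Set G) * K₂ := hsub (Set.subset_mul_left _ K₁.one_mem hh)
    exact Subgroup.mul_inter_left_subset hH₂A hK₂B hH₂ ⟨hh', hH₁A hh⟩
  · intro k hk
    have hk' : k ∈ (H₂ : Set G) * K₂ := hsub (Set.subset_mul_right _ H₁.one_mem hk)
    exact Subgroup.mul_inter_right_subset hH₂A hK₂B hK₂ ⟨hk', hK₁B hk⟩

theorem stmt8 {G : Type*} [Group G] (A B H₁ H₂ K₁ K₂ : Subgroup G)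
    (hG : ∀ g : G, ∃ a ∈ A, ∃ b ∈ B, g = a * b)
    (hH₁ : A ⊓ B ≤ H₁) (hH₁A : H₁ ≤ A) (hH₂ : A ⊓ B ≤ H₂) (hH₂A : H₂ ≤ A)
    (hK₁ : A ⊓ B ≤ K₁) (hK₁B : K₁ ≤ B) (hK₂ : A ⊓ B ≤ K₂) (hK₂B : K₂ ≤ B)
    (hsub : (H₁ : Set G) * (K₁ : Set G) ⊆ (H₂ : Set G) * (K₂ : Set G)) :
    H₁ ≤ H₂ ∧ K₁ ≤ K₂ :=
  stmt8_general A B H₁ H₂ K₁ K₂ hH₁A hH₂ hH₂A hK₁B hK₂ hK₂B hsub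
end

section
/- Let G be a finite group that is a central product of A and B. If HK ∈ CD(G) for some H ≤ A and K ≤ B, then m*(G)·|A ∩ B|² = m*(A)·m*(B), and H(A∩B) ∈ CD(A) and K(A∩B) ∈ CD(B). -/
open scoped Pointwise

/-- The Chermak–Delgado lattice of `W`: subgroups of `W` maximizing `m W`. -/
def CD {G : Type*} [Group G] (W : Subgroup G) : Set (Subgroup G) :=
  {K | K ≤ W ∧ ∀ L ≤ W, m W L ≤ m W K}

/-- `m*(W)`, the maximal Chermak–Delgado measure over subgroups of `W`. -/
noncomputable def mstar {G : Type*} [Group G] (W : Subgroup G) : ℕ :=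
  ⨆ K : {K : Subgroup G // K ≤ W}, m W K

/-! Since `A` and `B` commute elementwise, `Z = A ∩ B` is central and, for `Z ≤ X ≤ A` and
`Z ≤ Y ≤ B`, both `XY` and `C_G(XY) = C_A(X) C_B(Y)` are products of two subgroups meeting in `Z`.
The product formula `|ST| |S ∩ T| = |S| |T|` then gives `m_G(XY) |Z|² = m_A(X) m_B(Y)`.
Adjoining `Z` never decreases `m`, so `m*(A)` and `m*(B)` are attained by subgroups containing `Z`,
which yields `m*(A) m*(B) ≤ m*(G) |Z|²`; conversely `HK ∈ CD(G)` gives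
`m*(G) |Z|² = m_A(HZ) m_B(KZ) ≤ m*(A) m*(B)`, and equality forces both factors to be maximal. -/

open Subgroup

namespace Subgroup

variable {G : Type*} [Group G]

theorem card_sup_mul_card_inf_of_le_normalizer {H N : Subgroup G}
    (hHN : H ≤ normalizer (N : Set G)) :
    Nat.card (H ⊔ N : Subgroup G) * Nat.card (H ⊓ N : Subgroup G) =
      Nat.card H * Nat.card N := by
  have := normal_subgroupOf_of_le_normalizer hHN
  have := normal_subgroupOf_sup_of_le_normalizer hHN
  have hindex : N.relIndex (H ⊔ N) = N.relIndex H :=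
    (Nat.card_congr (QuotientGroup.quotientInfEquivProdNormalizerQuotient H N hHN).toEquiv).symm
  have hsup := relIndex_mul_relIndex ⊥ N (H ⊔ N) bot_le le_sup_right
  have hH := relIndex_mul_relIndex ⊥ (N ⊓ H) H bot_le inf_le_right
  rw [inf_relIndex_right] at hH
  simp only [relIndex_bot_left] at hsup hH
  rw [← hsup, ← hH, hindex, inf_comm]
  ring

theorem card_sup_mul_card_inf_of_le_centralizer {H N : Subgroup G}
    (hHN : H ≤ centralizer (N : Set G)) :
    Nat.card (H ⊔ N : Subgroup G) * Nat.card (H ⊓ N : Subgroup G) =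
      Nat.card H * Nat.card N :=
  card_sup_mul_card_inf_of_le_normalizer (hHN.trans (centralizer_le_normalizer _))

theorem centralizer_sup (X Y : Subgroup G) :
    centralizer ((X ⊔ Y : Subgroup G) : Set G) =
      centralizer (X : Set G) ⊓ centralizer (Y : Set G) := by
  have hclosure : X ⊔ Y = closure ((X : Set G) ∪ Y) := by
    rw [closure_union, closure_eq, closure_eq]
  rw [hclosure, centralizer_closure]
  ext g
  simp only [mem_centralizer_iff, Set.mem_union, mem_inf, or_imp, forall_and, SetLike.mem_coe]

theorem centralizer_sup_of_le_center (L : Subgroup G) {Z : Subgroup G} (hZ : Z ≤ center G) :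
    centralizer ((L ⊔ Z : Subgroup G) : Set G) = centralizer (L : Set G) := by
  rw [centralizer_sup, centralizer_eq_top_iff_subset.mpr hZ, inf_top_eq]

end Subgroup

section ChermakDelgado

variable {G : Type*} [Group G] [Finite G]

theorem m_pos (W L : Subgroup G) : 0 < m W L :=
  Nat.mul_pos Nat.card_pos Nat.card_pos

theorem m_le_mstar {W L : Subgroup G} (hL : L ≤ W) : m W L ≤ mstar W :=
  le_ciSup (f := fun K : {K : Subgroup G // K ≤ W} => m W K) (Set.finite_range _).bddAbove
    ⟨L, hL⟩

theorem mstar_pos (W : Subgroup G) : 0 < mstar W :=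
  (m_pos W ⊥).trans_le (m_le_mstar bot_le)

theorem exists_mem_CD (W : Subgroup G) : ∃ K, K ∈ CD W := by
  have : Nonempty {K : Subgroup G // K ≤ W} := ⟨⟨⊥, bot_le⟩⟩
  obtain ⟨⟨K, hKW⟩, hmax⟩ := Finite.exists_max fun K : {K : Subgroup G // K ≤ W} => m W K
  exact ⟨K, hKW, fun L hL => hmax ⟨L, hL⟩⟩

theorem mem_CD_iff {W K : Subgroup G} : K ∈ CD W ↔ K ≤ W ∧ m W K = mstar W := by
  have : Nonempty {K : Subgroup G // K ≤ W} := ⟨⟨⊥, bot_le⟩⟩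
  refine ⟨fun hK => ⟨hK.1, (m_le_mstar hK.1).antisymm (ciSup_le fun L => hK.2 L L.2)⟩, ?_⟩
  rintro ⟨hKW, hmK⟩
  exact ⟨hKW, fun L hL => hmK ▸ m_le_mstar hL⟩

theorem m_le_m_sup_of_le_center (W L : Subgroup G) {Z : Subgroup G} (hZ : Z ≤ center G) :
    m W L ≤ m W (L ⊔ Z) := by
  unfold m
  rw [centralizer_sup_of_le_center L hZ]
  exact Nat.mul_le_mul_right _ (card_le_of_le le_sup_left)

theorem sup_mem_CD_of_le_center {W K Z : Subgroup G} (hK : K ∈ CD W) (hZW : Z ≤ W)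
    (hZ : Z ≤ center G) : K ⊔ Z ∈ CD W :=
  ⟨sup_le hK.1 hZW, fun L hL => (hK.2 L hL).trans (m_le_m_sup_of_le_center W K hZ)⟩

end ChermakDelgado

structure IsCentralProduct {G : Type*} [Group G] (A B : Subgroup G) : Prop where
  exists_mul_eq : ∀ g : G, ∃ a ∈ A, ∃ b ∈ B, g = a * b
  commute : ∀ a ∈ A, ∀ b ∈ B, a * b = b * a

namespace IsCentralProduct

variable {G : Type*} [Group G] {A B X Y : Subgroup G}

theorem sup_eq_top (h : IsCentralProduct A B) : A ⊔ B = ⊤ := by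
  refine eq_top_iff.2 fun g _ => ?_
  obtain ⟨a, ha, b, hb, rfl⟩ := h.exists_mul_eq g
  exact mul_mem_sup ha hb

theorem left_le_centralizer (h : IsCentralProduct A B) (hXA : X ≤ A) (hYB : Y ≤ B) :
    X ≤ centralizer (Y : Set G) := fun x hx =>
  mem_centralizer_iff.2 fun y hy => (h.commute x (hXA hx) y (hYB hy)).symm

theorem right_le_centralizer (h : IsCentralProduct A B) (hXA : X ≤ A) (hYB : Y ≤ B) :
    Y ≤ centralizer (X : Set G) :=
  le_centralizer_iff.1 (h.left_le_centralizer hXA hYB)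

theorem inf_le_center (h : IsCentralProduct A B) : A ⊓ B ≤ center G := by
  rw [← centralizer_univ, ← coe_top, ← h.sup_eq_top, centralizer_sup]
  exact le_inf (h.right_le_centralizer le_rfl inf_le_right)
    (h.left_le_centralizer inf_le_left le_rfl)

theorem centralizer_sup_eq (h : IsCentralProduct A B) (hXA : X ≤ A) (hYB : Y ≤ B) :
    centralizer ((X ⊔ Y : Subgroup G) : Set G) =
      (A ⊓ centralizer (X : Set G)) ⊔ (B ⊓ centralizer (Y : Set G)) := by
  rw [centralizer_sup]
  refine le_antisymm ?_ (sup_le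
    (le_inf inf_le_right (inf_le_left.trans (h.left_le_centralizer le_rfl hYB)))
    (le_inf (inf_le_left.trans (h.right_le_centralizer hXA le_rfl)) inf_le_right))
  intro g hg
  obtain ⟨hgX, hgY⟩ := mem_inf.1 hg
  obtain ⟨a, ha, b, hb, rfl⟩ := h.exists_mul_eq g
  have hbX : b ∈ centralizer (X : Set G) := h.right_le_centralizer hXA le_rfl hb
  have haY : a ∈ centralizer (Y : Set G) := h.left_le_centralizer le_rfl hYB ha
  have haX : a ∈ centralizer (X : Set G) := by
    simpa using mul_mem hgX (inv_mem hbX)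
  have hbY : b ∈ centralizer (Y : Set G) := by
    simpa using mul_mem (inv_mem haY) hgY
  exact mul_mem_sup (mem_inf.2 ⟨ha, haX⟩) (mem_inf.2 ⟨hb, hbY⟩)

theorem m_top_sup_mul_card_sq (h : IsCentralProduct A B) (hXA : X ≤ A) (hYB : Y ≤ B)
    (hX : A ⊓ B ≤ X) (hY : A ⊓ B ≤ Y) :
    m ⊤ (X ⊔ Y) * Nat.card (A ⊓ B : Subgroup G) ^ 2 = m A X * m B Y := by
  have hXY : Nat.card (X ⊔ Y : Subgroup G) * Nat.card (A ⊓ B : Subgroup G) =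
      Nat.card X * Nat.card Y := by
    rw [← le_antisymm (inf_le_inf hXA hYB) (le_inf hX hY)]
    exact card_sup_mul_card_inf_of_le_centralizer (h.left_le_centralizer hXA hYB)
  have hinf : (A ⊓ centralizer (X : Set G)) ⊓ (B ⊓ centralizer (Y : Set G)) = A ⊓ B :=
    le_antisymm (inf_le_inf inf_le_left inf_le_left)
      (le_inf (le_inf inf_le_left (h.inf_le_center.trans (center_le_centralizer _)))
        (le_inf inf_le_right (h.inf_le_center.trans (center_le_centralizer _))))
  have hC : Nat.card (⊤ ⊓ centralizer ((X ⊔ Y : Subgroup G) : Set G) : Subgroup G) *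
      Nat.card (A ⊓ B : Subgroup G) =
      Nat.card (A ⊓ centralizer (X : Set G) : Subgroup G) *
        Nat.card (B ⊓ centralizer (Y : Set G) : Subgroup G) := by
    rw [top_inf_eq, h.centralizer_sup_eq hXA hYB, ← hinf]
    exact card_sup_mul_card_inf_of_le_centralizer
      (h.left_le_centralizer inf_le_left inf_le_left)
  unfold m
  rw [sq, mul_mul_mul_comm, hXY, hC, mul_mul_mul_comm]

theorem mstar_mul_mstar_le [Finite G] (h : IsCentralProduct A B) :
    mstar A * mstar B ≤ mstar (⊤ : Subgroup G) * Nat.card (A ⊓ B : Subgroup G) ^ 2 := by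
  obtain ⟨X, hX⟩ := exists_mem_CD A
  obtain ⟨Y, hY⟩ := exists_mem_CD B
  obtain ⟨hXA, hmX⟩ := mem_CD_iff.1 (sup_mem_CD_of_le_center hX inf_le_left h.inf_le_center)
  obtain ⟨hYB, hmY⟩ := mem_CD_iff.1 (sup_mem_CD_of_le_center hY inf_le_right h.inf_le_center)
  rw [← hmX, ← hmY, ← h.m_top_sup_mul_card_sq hXA hYB le_sup_right le_sup_right]
  exact Nat.mul_le_mul_right _ (m_le_mstar le_top)

end IsCentralProduct

theorem stmt10 {G : Type*} [Group G] [Finite G] (A B H K : Subgroup G)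
    (hG : ∀ g : G, ∃ a ∈ A, ∃ b ∈ B, g = a * b)
    (hcomm : ∀ a ∈ A, ∀ b ∈ B, a * b = b * a)
    (hHA : H ≤ A) (hKB : K ≤ B)
    (hHK : H ⊔ K ∈ CD (⊤ : Subgroup G)) :
    mstar (⊤ : Subgroup G) * Nat.card ↥(A ⊓ B) ^ 2 = mstar A * mstar B ∧
      H ⊔ (A ⊓ B) ∈ CD A ∧ K ⊔ (A ⊓ B) ∈ CD B := by
  have hAB : IsCentralProduct A B := ⟨hG, hcomm⟩
  set Z := A ⊓ B
  have hHZ : H ⊔ Z ≤ A := sup_le hHA inf_le_left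
  have hKZ : K ⊔ Z ≤ B := sup_le hKB inf_le_right
  have hHKZ : (H ⊔ Z) ⊔ (K ⊔ Z) ∈ CD (⊤ : Subgroup G) := by
    rw [sup_sup_sup_comm, sup_idem]
    exact sup_mem_CD_of_le_center hHK le_top hAB.inf_le_center
  have hmstar : mstar (⊤ : Subgroup G) * Nat.card Z ^ 2 = m A (H ⊔ Z) * m B (K ⊔ Z) := by
    rw [← (mem_CD_iff.1 hHKZ).2]
    exact hAB.m_top_sup_mul_card_sq hHZ hKZ le_sup_right le_sup_right
  have hmax : m A (H ⊔ Z) * m B (K ⊔ Z) = mstar A * mstar B :=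
    le_antisymm (Nat.mul_le_mul (m_le_mstar hHZ) (m_le_mstar hKZ))
      (hmstar ▸ hAB.mstar_mul_mstar_le)
  obtain ⟨hmA, hmB⟩ := (mul_eq_mul_iff_eq_and_eq_of_pos (m_le_mstar hHZ) (m_le_mstar hKZ)
    (m_pos A _) (mstar_pos B)).1 hmax
  exact ⟨hmstar.trans hmax, mem_CD_iff.2 ⟨hHZ, hmA⟩, mem_CD_iff.2 ⟨hKZ, hmB⟩⟩
end

section
/- Suppose G is a finite group, X ≤ H ≤ G with G = H·C_G(X), and X ∈ CD(H). Then for every Y ∈ CD(G): ⟨X,Y⟩ ∈ CD(G), X ∩ Y ∈ CD(H), ⟨X,Y⟩ = XY, and C_G(X ∩ Y) = C_G(X)·C_G(Y). -/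
open scoped Pointwise

/-- The product formula `|A| * |B| = |AB| * |A ⊓ B|`. -/
lemma card_mul_mul {G : Type*} [Group G] [Finite G] (A B : Subgroup G) :
    Nat.card A * Nat.card B =
      Nat.card (↑A * ↑B : Set G) * Nat.card (A ⊓ B : Subgroup G) := by
  classical
  have hdec : ∀ x : (↑A * ↑B : Set G), ∃ a ∈ (A : Set G), ∃ b ∈ (B : Set G),
      a * b = (x : G) := fun x => Set.mem_mul.mp x.2
  choose f hf g' hg hfg using hdec
  let φ : ((↑A * ↑B : Set G) × (A ⊓ B : Subgroup G)) → A × B := fun p =>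
    (⟨f p.1 * (p.2 : G), mul_mem (hf p.1) ((Subgroup.mem_inf.mp p.2.2).1)⟩,
     ⟨(p.2 : G)⁻¹ * g' p.1, mul_mem (inv_mem ((Subgroup.mem_inf.mp p.2.2).2)) (hg p.1)⟩)
  have hbij : Function.Bijective φ := by
    constructor
    · rintro ⟨p₁, x₁⟩ ⟨p₂, x₂⟩ h
      rw [Prod.ext_iff] at h
      have h1 : f p₁ * (x₁ : G) = f p₂ * (x₂ : G) := congrArg Subtype.val h.1
      have h2 : (x₁ : G)⁻¹ * g' p₁ = (x₂ : G)⁻¹ * g' p₂ := congrArg Subtype.val h.2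
      have hp : (p₁ : G) = (p₂ : G) := by
        calc (p₁ : G) = (f p₁ * (x₁ : G)) * ((x₁ : G)⁻¹ * g' p₁) := by
              rw [← hfg p₁]; group
          _ = (f p₂ * (x₂ : G)) * ((x₂ : G)⁻¹ * g' p₂) := by rw [h1, h2]
          _ = (p₂ : G) := by rw [← hfg p₂]; group
      have hpp : p₁ = p₂ := Subtype.ext hp
      subst hpp
      have hx : (x₁ : G) = x₂ := mul_left_cancel h1
      exact Prod.ext rfl (Subtype.ext hx)
    · rintro ⟨a, b⟩
      have hz : (a : G) * b ∈ (↑A * ↑B : Set G) := Set.mul_mem_mul a.2 b.2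
      set z : (↑A * ↑B : Set G) := ⟨(a : G) * b, hz⟩ with hzdef
      have hmem : (f z)⁻¹ * (a : G) ∈ A ⊓ B := by
        refine Subgroup.mem_inf.mpr ⟨mul_mem (inv_mem (hf z)) a.2, ?_⟩
        have h2 : (a : G) = f z * g' z * (b : G)⁻¹ := by
          rw [hfg z]; show (a : G) = (a : G) * b * (b : G)⁻¹; simp [mul_assoc]
        have h3 : (f z)⁻¹ * (a : G) = g' z * (b : G)⁻¹ := by rw [h2]; group
        rw [h3]
        exact mul_mem (hg z) (inv_mem b.2)
      refine ⟨⟨z, ⟨(f z)⁻¹ * (a : G), hmem⟩⟩, ?_⟩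
      have hfz : f z * g' z = (a : G) * b := hfg z
      refine Prod.ext (Subtype.ext ?_) (Subtype.ext ?_)
      · show f z * ((f z)⁻¹ * (a : G)) = (a : G); group
      · show ((f z)⁻¹ * (a : G))⁻¹ * g' z = (b : G)
        rw [mul_inv_rev, inv_inv, mul_assoc, ← eq_inv_mul_iff_mul_eq.mpr hfz.symm]
  have := Nat.card_eq_of_bijective φ hbij
  rw [Nat.card_prod, Nat.card_prod] at this
  exact this.symm

lemma nat_eq_of_mul_le {x u y v : ℕ} (hx : x ≤ u) (hy : y ≤ v)
    (h : u * v ≤ x * y) (hu : 0 < u) (hv : 0 < v) : x = u ∧ y = v := by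
  have h1 : x * y ≤ u * y := Nat.mul_le_mul_right y hx
  have h2 : u * v ≤ u * y := le_trans h h1
  have hyv : y = v := le_antisymm hy (Nat.le_of_mul_le_mul_left h2 hu)
  subst hyv
  have hy0 : 0 < y := hv
  have h3 : u * y ≤ x * y := h
  have hxu : x = u := le_antisymm hx (Nat.le_of_mul_le_mul_right h3 hy0)
  exact ⟨hxu, rfl⟩

theorem stmt12 {G : Type*} [Group G] [Finite G] (X H : Subgroup G)
    (hXH : X ≤ H)
    (hG : ∀ g : G, ∃ h ∈ H, ∃ c ∈ Subgroup.centralizer (X : Set G), g = h * c)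
    (hX : X ∈ CD H) :
    ∀ Y ∈ CD (⊤ : Subgroup G),
      X ⊔ Y ∈ CD (⊤ : Subgroup G) ∧ X ⊓ Y ∈ CD H ∧
        ((X ⊔ Y : Subgroup G) : Set G) = (X : Set G) * (Y : Set G) ∧
        ((Subgroup.centralizer ((X ⊓ Y : Subgroup G) : Set G) : Subgroup G) : Set G) =
          (Subgroup.centralizer (X : Set G) : Set G) *
            (Subgroup.centralizer (Y : Set G) : Set G) := by
  intro Y hY
  classical
  set Cx := Subgroup.centralizer (X : Set G) with hCxdef
  set Cy := Subgroup.centralizer (Y : Set G) with hCydef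
  set Ci := Subgroup.centralizer ((X ⊓ Y : Subgroup G) : Set G) with hCidef
  set Cs := Subgroup.centralizer ((X ⊔ Y : Subgroup G) : Set G) with hCsdef
  -- centralizer of the sup
  have hCs : Cs = Cx ⊓ Cy := by
    refine le_antisymm (le_inf ?_ ?_) ?_
    · exact Subgroup.centralizer_le (SetLike.coe_subset_coe.mpr le_sup_left)
    · exact Subgroup.centralizer_le (SetLike.coe_subset_coe.mpr le_sup_right)
    · rw [← Subgroup.le_centralizer_iff]
      refine sup_le ?_ ?_
      · exact le_trans (Subgroup.le_centralizer_iff.mpr le_rfl)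
          (Subgroup.centralizer_le (SetLike.coe_subset_coe.mpr inf_le_left))
      · exact le_trans (Subgroup.le_centralizer_iff.mpr le_rfl)
          (Subgroup.centralizer_le (SetLike.coe_subset_coe.mpr inf_le_right))
  have hCxCi : Cx ≤ Ci :=
    Subgroup.centralizer_le (SetLike.coe_subset_coe.mpr inf_le_left)
  have hCyCi : Cy ≤ Ci :=
    Subgroup.centralizer_le (SetLike.coe_subset_coe.mpr inf_le_right)
  -- names for the cardinalities
  set a := Nat.card X
  set b := Nat.card Y
  set i := Nat.card (X ⊓ Y : Subgroup G)
  set s := Nat.card (X ⊔ Y : Subgroup G)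
  set p := Nat.card (↑X * ↑Y : Set G)
  set ca := Nat.card Cx
  set cb := Nat.card Cy
  set ci := Nat.card Ci
  set cs := Nat.card (Cx ⊓ Cy : Subgroup G)
  set q := Nat.card (↑Cx * ↑Cy : Set G)
  set hh := Nat.card H
  set g := Nat.card G
  set cah := Nat.card (H ⊓ Cx : Subgroup G)
  set cih := Nat.card (H ⊓ Ci : Subgroup G)
  -- positivity
  have posG : 0 < g := Nat.card_pos
  have poshh : 0 < hh := Nat.card_pos
  have posa : 0 < a := Nat.card_pos
  have posb : 0 < b := Nat.card_pos
  have posi : 0 < i := Nat.card_pos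
  have poss : 0 < s := Nat.card_pos
  have posca : 0 < ca := Nat.card_pos
  have poscb : 0 < cb := Nat.card_pos
  have posci : 0 < ci := Nat.card_pos
  have poscs : 0 < cs := Nat.card_pos
  -- product formulas
  have E1 : a * b = p * i := card_mul_mul X Y
  have E2 : ca * cb = q * cs := card_mul_mul Cx Cy
  -- subsets giving p ≤ s and q ≤ ci
  have hsubXY : (↑X * ↑Y : Set G) ⊆ ((X ⊔ Y : Subgroup G) : Set G) := by
    rw [Set.mul_subset_iff]
    intro x hx y hy
    exact mul_mem ((le_sup_left : X ≤ X ⊔ Y) hx) ((le_sup_right : Y ≤ X ⊔ Y) hy)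
  have hsubC : (↑Cx * ↑Cy : Set G) ⊆ (Ci : Set G) := by
    rw [Set.mul_subset_iff]
    intro x hx y hy
    exact mul_mem (hCxCi hx) (hCyCi hy)
  have cardS : s = ((X ⊔ Y : Subgroup G) : Set G).ncard := by
    rw [← Nat.card_coe_set_eq]; rfl
  have cardI : ci = (Ci : Set G).ncard := by
    rw [← Nat.card_coe_set_eq]; rfl
  have hp : p ≤ s := by
    rw [cardS]
    calc p = (↑X * ↑Y : Set G).ncard := by rw [← Nat.card_coe_set_eq]
      _ ≤ _ := Set.ncard_le_ncard hsubXY (Set.toFinite _)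
  have hq : q ≤ ci := by
    rw [cardI]
    calc q = (↑Cx * ↑Cy : Set G).ncard := by rw [← Nat.card_coe_set_eq]
      _ ≤ _ := Set.ncard_le_ncard hsubC (Set.toFinite _)
  -- H * Cx = univ and H * Ci = univ
  have hUnivX : (↑H * ↑Cx : Set G) = Set.univ := by
    apply Set.eq_univ_of_forall
    intro x
    obtain ⟨h1, hh1, c1, hc1, rfl⟩ := hG x
    exact Set.mul_mem_mul hh1 hc1
  have hUnivI : (↑H * ↑Ci : Set G) = Set.univ := by
    apply Set.eq_univ_of_forall
    intro x
    obtain ⟨h1, hh1, c1, hc1, rfl⟩ := hG x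
    exact Set.mul_mem_mul hh1 (hCxCi hc1)
  have E5 : hh * ca = g * cah := by
    have := card_mul_mul H Cx
    rw [hUnivX] at this
    simpa only [Nat.card_univ] using this
  have E6 : hh * ci = g * cih := by
    have := card_mul_mul H Ci
    rw [hUnivI] at this
    simpa only [Nat.card_univ] using this
  -- maximality facts
  have E7 : i * cih ≤ a * cah := by
    have := hX.2 (X ⊓ Y) (le_trans inf_le_left hXH)
    simpa only [m] using this
  have E8 : s * cs ≤ b * cb := by
    have := hY.2 (X ⊔ Y) le_top
    simp only [m, top_inf_eq] at this
    rw [← hCsdef, hCs] at this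
    exact this
  -- step 2 : i * ci ≤ a * ca
  have step2 : i * ci ≤ a * ca := by
    have h1 : hh * (i * ci) ≤ hh * (a * ca) := by
      calc hh * (i * ci) = i * (hh * ci) := by ring
        _ = i * (g * cih) := by rw [E6]
        _ = (i * cih) * g := by ring
        _ ≤ (a * cah) * g := Nat.mul_le_mul_right g E7
        _ = a * (g * cah) := by ring
        _ = a * (hh * ca) := by rw [E5]
        _ = hh * (a * ca) := by ring
    exact Nat.le_of_mul_le_mul_left h1 poshh
  -- the key chain
  have chain : (a * ca) * (b * cb) ≤ (i * ci) * (s * cs) := by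
    calc (a * ca) * (b * cb) = (a * b) * (ca * cb) := by ring
      _ = (p * i) * (q * cs) := by rw [E1, E2]
      _ ≤ (s * i) * (ci * cs) :=
          Nat.mul_le_mul (Nat.mul_le_mul_right i hp) (Nat.mul_le_mul_right cs hq)
      _ = (i * ci) * (s * cs) := by ring
  -- extract equalities
  obtain ⟨hieq, hseq⟩ := nat_eq_of_mul_le step2 E8 chain
    (Nat.mul_pos posa posca) (Nat.mul_pos posb poscb)
  -- now extract p = s and q = ci
  have chain2 : (s * i) * (ci * cs) ≤ (p * i) * (q * cs) := by
    refine le_of_eq ?_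
    calc (s * i) * (ci * cs) = (i * ci) * (s * cs) := by ring
      _ = (a * ca) * (b * cb) := by rw [hieq, hseq]
      _ = (a * b) * (ca * cb) := by ring
      _ = (p * i) * (q * cs) := by rw [E1, E2]
  obtain ⟨hpeq, hqeq⟩ := nat_eq_of_mul_le
    (Nat.mul_le_mul_right i hp) (Nat.mul_le_mul_right cs hq) chain2
    (Nat.mul_pos poss posi) (Nat.mul_pos posci poscs)
  have hps : p = s := Nat.eq_of_mul_eq_mul_right posi hpeq
  have hqi : q = ci := Nat.eq_of_mul_eq_mul_right poscs hqeq
  -- m H (X ⊓ Y) = m H X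
  have hmH : i * cih = a * cah := by
    have h1 : (i * cih) * g = (a * cah) * g := by
      calc (i * cih) * g = i * (g * cih) := by ring
        _ = i * (hh * ci) := by rw [E6]
        _ = hh * (i * ci) := by ring
        _ = hh * (a * ca) := by rw [hieq]
        _ = a * (hh * ca) := by ring
        _ = a * (g * cah) := by rw [E5]
        _ = (a * cah) * g := by ring
    exact Nat.eq_of_mul_eq_mul_right posG h1
  refine ⟨?_, ?_, ?_, ?_⟩
  · -- X ⊔ Y ∈ CD ⊤
    refine ⟨le_top, fun L hL => ?_⟩
    have h1 : m ⊤ L ≤ m ⊤ Y := hY.2 L hL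
    have h2 : m ⊤ (X ⊔ Y) = m ⊤ Y := by
      simp only [m, top_inf_eq]
      rw [← hCsdef, hCs, ← hCydef]
      exact hseq
    rw [h2]; exact h1
  · -- X ⊓ Y ∈ CD H
    refine ⟨le_trans inf_le_left hXH, fun L hL => ?_⟩
    have h1 : m H L ≤ m H X := hX.2 L hL
    have h2 : m H (X ⊓ Y) = m H X := by
      simp only [m]
      rw [← hCxdef, ← hCidef]
      exact hmH
    rw [h2]; exact h1
  · -- coe (X ⊔ Y) = X * Y
    refine (Set.eq_of_subset_of_ncard_le hsubXY ?_ (Set.toFinite _)).symm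
    rw [← cardS, ← Nat.card_coe_set_eq, ← hps]
  · -- coe Ci = Cx * Cy
    refine (Set.eq_of_subset_of_ncard_le hsubC ?_ (Set.toFinite _)).symm
    rw [← cardI, ← Nat.card_coe_set_eq, ← hqi]
end

section
/- Suppose G is a finite group with CD(G) = {Z(G), G}. Then G admits no proper central product: whenever G = AB with [A,B] = 1, at least one of A or B is abelian (equivalently contained in Z(G)). -/
/-!
Let `G = AB` with `[A, B] = 1` and put `H = C_G(B)`, so that `A ≤ H`, `B ≤ C_G(H)` and hence
`G = H · C_G(H)`. Then `H` is normal and the product formula gives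
`|H| · |C_G(H)| = |G| · |H ∩ C_G(H)| ≥ |G| · |Z(G)|`, the measure of `Z(G)`. As `Z(G)` lies in the
Chermak–Delgado lattice, so does `H`; thus `H = Z(G)`, forcing `A ≤ Z(G)`, or `H = G`, forcing
`B ≤ Z(G)`.
-/

open scoped Pointwise

namespace Subgroup

variable {G : Type*} [Group G]

theorem card_inf_mul_relIndex (H K : Subgroup G) :
    Nat.card (H ⊓ K : Subgroup G) * H.relIndex K = Nat.card K := by
  simpa [relIndex_bot_left, inf_comm] using relIndex_inf_mul_relIndex ⊥ H K

theorem card_mul_card_eq_card_mul_card_inf (H K : Subgroup G) [H.Normal] (hKH : K ⊔ H = ⊤) :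
    Nat.card H * Nat.card K = Nat.card G * Nat.card (H ⊓ K : Subgroup G) := by
  rw [← card_inf_mul_relIndex H K, ← relIndex_sup_right, hKH, relIndex_top_right,
    ← card_mul_index H]
  ring

section MulCentralizerEqUniv

variable {H : Subgroup G} (hH : (H : Set G) * (centralizer (H : Set G) : Set G) = Set.univ)
include hH

theorem normal_of_mul_centralizer_eq_univ : H.Normal where
  conj_mem x hx g := by
    obtain ⟨h, hh, c, hc, rfl⟩ := Set.mem_mul.mp (Set.eq_univ_iff_forall.mp hH g)
    have hcx : c * x * c⁻¹ = x := by rw [← mem_centralizer_iff.mp hc x hx, mul_inv_cancel_right]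
    have : h * c * x * (h * c)⁻¹ = h * (c * x * c⁻¹) * h⁻¹ := by group
    rw [this, hcx]
    exact H.mul_mem (H.mul_mem hh hx) (H.inv_mem hh)

theorem centralizer_sup_eq_top_of_mul_centralizer_eq_univ :
    centralizer (H : Set G) ⊔ H = ⊤ :=
  eq_top_iff.mpr fun g _ => by
    obtain ⟨h, hh, c, hc, rfl⟩ := Set.mem_mul.mp (Set.eq_univ_iff_forall.mp hH g)
    rw [mem_centralizer_iff.mp hc h hh]
    exact mul_mem_sup hc hh

theorem card_mul_card_centralizer_of_mul_centralizer_eq_univ :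
    Nat.card H * Nat.card (centralizer (H : Set G)) =
      Nat.card G * Nat.card (H ⊓ centralizer (H : Set G) : Subgroup G) :=
  have := normal_of_mul_centralizer_eq_univ hH
  card_mul_card_eq_card_mul_card_inf H _
    (centralizer_sup_eq_top_of_mul_centralizer_eq_univ hH)

end MulCentralizerEqUniv

end Subgroup

open Subgroup

theorem m_top_center {G : Type*} [Group G] :
    m ⊤ (center G) = Nat.card (center G) * Nat.card G := by
  rw [m, centralizer_eq_top_iff_subset.mpr subset_rfl, inf_top_eq, card_top]

theorem m_top_center_le {G : Type*} [Group G] [Finite G] {H : Subgroup G}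
    (hZH : center G ≤ H) (hH : (H : Set G) * (centralizer (H : Set G) : Set G) = Set.univ) :
    m ⊤ (center G) ≤ m ⊤ H := by
  rw [m_top_center, m, top_inf_eq, card_mul_card_centralizer_of_mul_centralizer_eq_univ hH,
    mul_comm]
  exact Nat.mul_le_mul_left _ (card_le_of_le (le_inf hZH (center_le_centralizer _)))

theorem mem_CD_of_m_le {G : Type*} [Group G] {W K H : Subgroup G} (hK : K ∈ CD W) (hHW : H ≤ W)
    (hKH : m W K ≤ m W H) : H ∈ CD W :=
  ⟨hHW, fun L hL => (hK.2 L hL).trans hKH⟩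

theorem eq_center_or_eq_top_of_CD_eq {G : Type*} [Group G] [Finite G]
    (hCD : CD (⊤ : Subgroup G) = {center G, ⊤}) {H : Subgroup G} (hZH : center G ≤ H)
    (hH : (H : Set G) * (centralizer (H : Set G) : Set G) = Set.univ) :
    H = center G ∨ H = ⊤ := by
  have hZ : center G ∈ CD (⊤ : Subgroup G) := hCD ▸ Or.inl rfl
  simpa [hCD] using mem_CD_of_m_le hZ le_top (m_top_center_le hZH hH)

theorem stmt17 {G : Type*} [Group G] [Finite G]
    (hCD : CD (⊤ : Subgroup G) = {Subgroup.center G, (⊤ : Subgroup G)}) :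
    ∀ A B : Subgroup G, (∀ g : G, ∃ a ∈ A, ∃ b ∈ B, g = a * b) →
      (∀ a ∈ A, ∀ b ∈ B, a * b = b * a) →
      A ≤ Subgroup.center G ∨ B ≤ Subgroup.center G := by
  intro A B hAB hcomm
  have hA : A ≤ centralizer (B : Set G) := fun a ha b hb => (hcomm a ha b hb).symm
  have hB : B ≤ centralizer (centralizer (B : Set G) : Set G) := le_centralizer_iff.mp le_rfl
  have hdecomp : (centralizer (B : Set G) : Set G) *
      (centralizer (centralizer (B : Set G) : Set G) : Set G) = Set.univ := by
    refine Set.eq_univ_of_forall fun g => ?_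
    obtain ⟨a, ha, b, hb, rfl⟩ := hAB g
    exact Set.mul_mem_mul (hA ha) (hB hb)
  rcases eq_center_or_eq_top_of_CD_eq hCD (center_le_centralizer _) hdecomp with hZ | hG
  · exact Or.inl (hZ ▸ hA)
  · exact Or.inr (centralizer_eq_top_iff_subset.mp hG)
end

section
/- Let G be a finite group and H ∈ CD(G). Then CD(H·C_G(H)) = {X ∈ CD(G) : Z(H) ≤ X ≤ H·C_G(H)}. -/
open scoped Pointwise

namespace CDAux

open Subgroup

variable {G : Type*} [Group G] [Finite G]

omit [Finite G] in
lemma m_top (K : Subgroup G) :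
    m ⊤ K = Nat.card K * Nat.card (centralizer (K : Set G)) := by
  unfold m; rw [top_inf_eq]

omit [Finite G] in
lemma card_subgroupOf (A B : Subgroup G) :
    Nat.card (B.subgroupOf A) = Nat.card (B ⊓ A : Subgroup G) := by
  rw [← subgroupOf_map_subtype]
  exact Nat.card_congr (equivMapOfInjective _ _ A.subtype_injective).toEquiv

lemma card_mul_card_le (A B : Subgroup G) :
    Nat.card A * Nat.card B ≤
      Nat.card (A ⊓ B : Subgroup G) * Nat.card (A ⊔ B : Subgroup G) := by
  have h1 : B.relIndex A * Nat.card (B ⊓ A : Subgroup G) = Nat.card A := by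
    rw [← card_subgroupOf A B]; exact (B.subgroupOf A).index_mul_card
  have h2 : B.relIndex (A ⊔ B) * Nat.card B = Nat.card (A ⊔ B : Subgroup G) := by
    have : Nat.card (B.subgroupOf (A ⊔ B)) = Nat.card B := by
      rw [card_subgroupOf, inf_of_le_left le_sup_right]
    rw [← this]; exact (B.subgroupOf (A ⊔ B)).index_mul_card
  have h3 : B.relIndex A ≤ B.relIndex (A ⊔ B) :=
    relIndex_le_of_le_right le_sup_left FiniteIndex.index_ne_zero
  calc Nat.card A * Nat.card B
      = B.relIndex A * Nat.card (B ⊓ A : Subgroup G) * Nat.card B := by rw [h1]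
    _ ≤ B.relIndex (A ⊔ B) * Nat.card (B ⊓ A : Subgroup G) * Nat.card B :=
        Nat.mul_le_mul_right _ (Nat.mul_le_mul_right _ h3)
    _ = Nat.card (A ⊓ B : Subgroup G) * (B.relIndex (A ⊔ B) * Nat.card B) := by
        rw [inf_comm]; ring
    _ = _ := by rw [h2]

omit [Finite G] in
lemma cent_sup (A B : Subgroup G) :
    centralizer ((A ⊔ B : Subgroup G) : Set G) =
      centralizer (A : Set G) ⊓ centralizer (B : Set G) := by
  apply le_antisymm
  · exact le_inf (centralizer_le (SetLike.coe_subset_coe.2 le_sup_left))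
      (centralizer_le (SetLike.coe_subset_coe.2 le_sup_right))
  · rw [le_centralizer_iff]
    exact sup_le (le_centralizer_iff.2 inf_le_left) (le_centralizer_iff.2 inf_le_right)

omit [Finite G] in
lemma cent_anti {A B : Subgroup G} (h : A ≤ B) :
    centralizer (B : Set G) ≤ centralizer (A : Set G) :=
  centralizer_le (SetLike.coe_subset_coe.2 h)

omit [Finite G] in
lemma cent_cent_cent (A : Subgroup G) :
    centralizer ((centralizer ((centralizer (A : Set G)) : Set G)) : Set G)
      = centralizer (A : Set G) := by
  apply le_antisymm
  · exact cent_anti (le_centralizer_iff.2 le_rfl)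
  · exact le_centralizer_iff.2 le_rfl

omit [Finite G] in
lemma center_map_eq (H : Subgroup G) :
    (Subgroup.center ↥H).map H.subtype = H ⊓ centralizer (H : Set G) := by
  ext x
  simp only [Subgroup.mem_map, Subgroup.mem_center_iff, Subgroup.mem_inf,
    Subgroup.mem_centralizer_iff, Subgroup.coe_subtype]
  constructor
  · rintro ⟨⟨y, hy⟩, hc, rfl⟩
    exact ⟨hy, fun h hh => congrArg Subtype.val (hc ⟨h, hh⟩)⟩
  · rintro ⟨hx, hc⟩
    exact ⟨⟨x, hx⟩, fun g => Subtype.ext (hc g g.2), rfl⟩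

lemma m_ineq (A B : Subgroup G) :
    m ⊤ A * m ⊤ B ≤ m ⊤ (A ⊓ B) * m ⊤ (A ⊔ B) := by
  rw [m_top, m_top, m_top, m_top]
  have h1 := card_mul_card_le A B
  have h2 := card_mul_card_le (centralizer (A : Set G)) (centralizer (B : Set G))
  have h3 : Nat.card (centralizer (A : Set G) ⊔ centralizer (B : Set G) : Subgroup G)
      ≤ Nat.card (centralizer ((A ⊓ B : Subgroup G) : Set G)) :=
    card_le_of_le (sup_le (cent_anti inf_le_left) (cent_anti inf_le_right))
  have h4 : centralizer (A : Set G) ⊓ centralizer (B : Set G)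
      = centralizer ((A ⊔ B : Subgroup G) : Set G) := (cent_sup A B).symm
  calc Nat.card A * Nat.card (centralizer (A : Set G)) *
        (Nat.card B * Nat.card (centralizer (B : Set G)))
      = Nat.card A * Nat.card B *
        (Nat.card (centralizer (A : Set G)) * Nat.card (centralizer (B : Set G))) := by ring
    _ ≤ (Nat.card (A ⊓ B : Subgroup G) * Nat.card (A ⊔ B : Subgroup G)) *
        (Nat.card (centralizer (A : Set G) ⊓ centralizer (B : Set G) : Subgroup G) *
         Nat.card (centralizer (A : Set G) ⊔ centralizer (B : Set G) : Subgroup G)) :=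
        Nat.mul_le_mul h1 h2
    _ ≤ (Nat.card (A ⊓ B : Subgroup G) * Nat.card (A ⊔ B : Subgroup G)) *
        (Nat.card (centralizer ((A ⊔ B : Subgroup G) : Set G)) *
         Nat.card (centralizer ((A ⊓ B : Subgroup G) : Set G))) := by
        rw [h4]
        exact Nat.mul_le_mul_left _ (Nat.mul_le_mul_left _ h3)
    _ = _ := by ring

end CDAux

theorem stmt18 {G : Type*} [Group G] [Finite G] (H : Subgroup G)
    (hH : H ∈ CD (⊤ : Subgroup G)) :
    CD (H ⊔ Subgroup.centralizer (H : Set G)) =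
      {X : Subgroup G | X ∈ CD (⊤ : Subgroup G) ∧
        (Subgroup.center ↥H).map H.subtype ≤ X ∧
        X ≤ H ⊔ Subgroup.centralizer (H : Set G)} := by
  classical
  open Subgroup CDAux in
  obtain ⟨-, hmax⟩ := hH
  set CH := Subgroup.centralizer (H : Set G) with hCHdef
  set W := H ⊔ CH with hWdef
  set Z := H ⊓ CH with hZdef
  set M := m ⊤ H with hMdef
  have hcardpos : ∀ K : Subgroup G, 0 < Nat.card K := fun K => Nat.card_pos
  have hle : ∀ K : Subgroup G, m ⊤ K ≤ M := fun K => hmax K le_top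
  -- double centralizer of maximal-measure subgroups
  have hCC : ∀ K : Subgroup G, m ⊤ K = M →
      Subgroup.centralizer ((Subgroup.centralizer (K : Set G)) : Set G) = K := by
    intro K hK
    set K'' := Subgroup.centralizer ((Subgroup.centralizer (K : Set G)) : Set G) with hK''
    have hKK'' : K ≤ K'' := le_centralizer_iff.2 le_rfl
    have hcent : Subgroup.centralizer (K'' : Set G) = Subgroup.centralizer (K : Set G) :=
      cent_cent_cent K
    have hm'' : m ⊤ K'' = Nat.card K'' * Nat.card (Subgroup.centralizer (K : Set G)) := by
      rw [m_top, hcent]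
    have hge : Nat.card K * Nat.card (Subgroup.centralizer (K : Set G))
        ≤ Nat.card K'' * Nat.card (Subgroup.centralizer (K : Set G)) :=
      Nat.mul_le_mul_right _ (card_le_of_le hKK'')
    have hlem : m ⊤ K'' ≤ M := hle K''
    rw [hm''] at hlem
    rw [m_top] at hK
    have heq : Nat.card K'' = Nat.card K :=
      Nat.le_antisymm
        (Nat.le_of_mul_le_mul_right (hK ▸ hlem) (hcardpos _))
        (Nat.le_of_mul_le_mul_right hge (hcardpos _))
    exact (eq_of_le_of_card_ge hKK'' heq.le).symm
  have hCmeas : ∀ K : Subgroup G, m ⊤ K = M →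
      m ⊤ (Subgroup.centralizer (K : Set G)) = M := by
    intro K hK
    rw [m_top, hCC K hK, mul_comm, ← m_top, hK]
  -- W and Z have maximal measure
  have hmCH : m ⊤ CH = M := hCmeas H rfl
  have hZW : m ⊤ Z = M ∧ m ⊤ W = M := by
    have hineq := m_ineq H CH
    rw [hmCH, ← hZdef, ← hWdef] at hineq
    have h1 : m ⊤ Z ≤ M := hle Z
    have h2 : m ⊤ W ≤ M := hle W
    have hMpos : 0 < M := by
      rw [hMdef, m_top]; exact Nat.mul_pos (hcardpos _) (hcardpos _)
    constructor
    · refine le_antisymm h1 ?_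
      have : M * M ≤ m ⊤ Z * M :=
        le_trans hineq (Nat.mul_le_mul_left _ h2)
      exact Nat.le_of_mul_le_mul_right this hMpos
    · refine le_antisymm h2 ?_
      have : M * M ≤ M * m ⊤ W := by
        calc M * M ≤ m ⊤ Z * m ⊤ W := hineq
          _ ≤ M * m ⊤ W := Nat.mul_le_mul_right _ h1
      exact Nat.le_of_mul_le_mul_left this hMpos
  have hCW : Subgroup.centralizer (W : Set G) = Z := by
    rw [hWdef, cent_sup, ← hCHdef, hCC H rfl, inf_comm]
  have hCZ : Subgroup.centralizer (Z : Set G) = W := by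
    rw [← hCW]; exact hCC W hZW.2
  -- membership criteria
  have memCD_top : ∀ X : Subgroup G, X ∈ CD (⊤ : Subgroup G) ↔ m ⊤ X = M := by
    intro X
    exact ⟨fun h => le_antisymm (hle X) (h.2 H le_top),
      fun h => ⟨le_top, fun L _ => h ▸ hle L⟩⟩
  have hWle : ∀ X : Subgroup G, m W X ≤ m ⊤ X := by
    intro X
    unfold m
    exact Nat.mul_le_mul_left _ (card_le_of_le (inf_le_inf_right _ le_top))
  have hZleW : Z ≤ W := inf_le_left.trans le_sup_left
  have hWZ : m W Z = M := by
    have hWCZ : W ⊓ Subgroup.centralizer (Z : Set G) = W := by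
      rw [hCZ, inf_idem]
    have hMW : M = Nat.card W * Nat.card Z := by
      rw [← hZW.2, m_top, hCW]
    unfold m
    rw [hWCZ, hMW, mul_comm]
  have memCD_W : ∀ X : Subgroup G, X ∈ CD W ↔ X ≤ W ∧ m W X = M := by
    intro X
    constructor
    · intro h
      exact ⟨h.1, le_antisymm ((hWle X).trans (hle X)) (hWZ ▸ h.2 Z hZleW)⟩
    · intro h
      exact ⟨h.1, fun L _ => h.2 ▸ (hWle L).trans (hle L)⟩
  -- final set equality
  ext X
  simp only [Set.mem_setOf_eq, memCD_W X, memCD_top X, center_map_eq, ← hCHdef, ← hZdef,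
    ← hWdef]
  constructor
  · rintro ⟨hXW, hmX⟩
    have hmtop : m ⊤ X = M := le_antisymm (hle X) (hmX ▸ hWle X)
    have hcardeq : Nat.card (W ⊓ Subgroup.centralizer (X : Set G) : Subgroup G)
        = Nat.card (Subgroup.centralizer (X : Set G)) := by
      have h1 : m W X = m ⊤ X := hmX.trans hmtop.symm
      unfold m at h1
      rw [top_inf_eq] at h1
      exact Nat.eq_of_mul_eq_mul_left (hcardpos X) h1
    have hCXW : Subgroup.centralizer (X : Set G) ≤ W := by
      have := eq_of_le_of_card_ge
        (inf_le_right : W ⊓ Subgroup.centralizer (X : Set G) ≤ _) hcardeq.ge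
      rw [← this]; exact inf_le_left
    have hZX : Z ≤ X := by
      have := cent_anti hCXW
      rw [hCW, hCC X hmtop] at this
      exact this
    exact ⟨hmtop, hZX, hXW⟩
  · rintro ⟨hmtop, hZX, hXW⟩
    refine ⟨hXW, ?_⟩
    have hCXW : Subgroup.centralizer (X : Set G) ≤ W := by
      have := cent_anti hZX
      rw [hCZ] at this
      exact this
    have : W ⊓ Subgroup.centralizer (X : Set G) = Subgroup.centralizer (X : Set G) :=
      inf_of_le_right hCXW
    unfold m
    rw [this, ← m_top X, hmtop]
end
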